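/- Let x_1,…,x_n ∈ R^p and let μ̂ be a point satisfying μ̂ = μ + (Σ_j s(x_j − μ)) / (Σ_j ‖x_j − μ̂‖^{-1}), where all x_j ≠ μ̂. Then ‖μ − μ̂‖ ≤ ‖Σ_j s(x_j − μ)‖ · Σ_j ‖x_j − μ‖ / (n² − n·‖Σ_j s(x_j − μ)‖), provided the denominator is positive. -/
import Mathlib


/-- The spatial-sign function `s(x) = x/‖x‖` for `x ≠ 0`, `s(0) = 0`. -/
noncomputable def spatialSign {p : ℕ} (x : EuclideanSpace ℝ (Fin p)) :
    EuclideanSpace ℝ (Fin p) :=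
  open Classical in
  if x = 0 then 0 else ‖x‖⁻¹ • x

/-- If `μ̂` satisfies the spatial-median fixed-point equation
`μ̂ = μ + (Σⱼ s(xⱼ − μ)) / (Σⱼ ‖xⱼ − μ̂‖⁻¹)` with all `xⱼ ≠ μ̂`, then
`‖μ − μ̂‖ ≤ ‖Σⱼ s(xⱼ − μ)‖ · Σⱼ ‖xⱼ − μ‖ / (n² − n‖Σⱼ s(xⱼ − μ)‖)`
provided the denominator is positive. -/
theorem spatial_median_distance_bound (p n : ℕ) (hn : 0 < n)
    (x : Fin n → EuclideanSpace ℝ (Fin p)) (μ μh : EuclideanSpace ℝ (Fin p))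
    (hxj : ∀ j, x j ≠ μh)
    (hfix : μh = μ + (∑ j, ‖x j - μh‖⁻¹)⁻¹ • ∑ j, spatialSign (x j - μ))
    (hden : 0 < (n : ℝ) ^ 2 - n * ‖∑ j, spatialSign (x j - μ)‖) :
    ‖μ - μh‖ ≤ ‖∑ j, spatialSign (x j - μ)‖ * (∑ j, ‖x j - μ‖)
      / ((n : ℝ) ^ 2 - n * ‖∑ j, spatialSign (x j - μ)‖) := by
  classical
  set S := ∑ j, spatialSign (x j - μ) with hS
  set D := ∑ j, ‖x j - μh‖⁻¹ with hD
  have hne : (Finset.univ : Finset (Fin n)).Nonempty := ⟨⟨0, hn⟩, Finset.mem_univ _⟩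
  have hpos : ∀ j : Fin n, (0:ℝ) < ‖x j - μh‖ := fun j =>
    norm_pos_iff.mpr (sub_ne_zero.mpr (hxj j))
  have hDpos : 0 < D :=
    Finset.sum_pos (fun j _ => inv_pos.mpr (hpos j)) hne
  have hnorm : ‖μ - μh‖ = ‖S‖ / D := by
    have h1 : μ - μh = -(D⁻¹ • S) := by
      rw [hfix]; abel
    rw [h1, norm_neg, norm_smul, norm_inv, Real.norm_eq_abs, abs_of_pos hDpos,
      div_eq_inv_mul]
  -- Cauchy–Schwarz / harmonic mean inequality
  have hCS : (n:ℝ)^2 ≤ (∑ j, ‖x j - μh‖) * D := by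
    have key := Finset.sum_mul_sq_le_sq_mul_sq Finset.univ
      (fun j => Real.sqrt ‖x j - μh‖) (fun j => Real.sqrt ‖x j - μh‖⁻¹)
    have e1 : ∀ j : Fin n, Real.sqrt ‖x j - μh‖ * Real.sqrt ‖x j - μh‖⁻¹ = 1 := by
      intro j
      rw [← Real.sqrt_mul (norm_nonneg _), mul_inv_cancel₀ (ne_of_gt (hpos j)),
        Real.sqrt_one]
    have e2 : ∀ j : Fin n, Real.sqrt ‖x j - μh‖ ^ 2 = ‖x j - μh‖ := fun j =>
      Real.sq_sqrt (norm_nonneg _)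
    have e3 : ∀ j : Fin n, Real.sqrt ‖x j - μh‖⁻¹ ^ 2 = ‖x j - μh‖⁻¹ := fun j =>
      Real.sq_sqrt (inv_nonneg.mpr (norm_nonneg _))
    simp only [e1, e2, e3, Finset.sum_const, Finset.card_univ, Fintype.card_fin,
      nsmul_eq_mul, mul_one] at key
    rw [hD]
    exact key
  have htri : ∑ j, ‖x j - μh‖ ≤ (∑ j, ‖x j - μ‖) + n * ‖μ - μh‖ := by
    have : ∀ j : Fin n, ‖x j - μh‖ ≤ ‖x j - μ‖ + ‖μ - μh‖ := by
      intro j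
      calc ‖x j - μh‖ = ‖(x j - μ) + (μ - μh)‖ := by rw [sub_add_sub_cancel]
      _ ≤ ‖x j - μ‖ + ‖μ - μh‖ := norm_add_le _ _
    calc ∑ j, ‖x j - μh‖ ≤ ∑ j : Fin n, (‖x j - μ‖ + ‖μ - μh‖) :=
        Finset.sum_le_sum (fun j _ => this j)
    _ = (∑ j, ‖x j - μ‖) + n * ‖μ - μh‖ := by
        rw [Finset.sum_add_distrib]
        simp [Finset.sum_const, Finset.card_univ, mul_comm]
  have key : (n:ℝ)^2 - n * ‖S‖ ≤ (∑ j, ‖x j - μ‖) * D := by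
    have h3 : (n:ℝ)^2 ≤ ((∑ j, ‖x j - μ‖) + n * (‖S‖ / D)) * D := by
      rw [hnorm] at htri
      calc (n:ℝ)^2 ≤ (∑ j, ‖x j - μh‖) * D := hCS
      _ ≤ ((∑ j, ‖x j - μ‖) + n * (‖S‖ / D)) * D :=
          mul_le_mul_of_nonneg_right htri hDpos.le
    have hDne : D ≠ 0 := ne_of_gt hDpos
    have : ((∑ j, ‖x j - μ‖) + n * (‖S‖ / D)) * D
        = (∑ j, ‖x j - μ‖) * D + n * ‖S‖ := by
      rw [add_mul, mul_assoc, div_mul_cancel₀ _ hDne]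
    rw [this] at h3; linarith
  rw [hnorm, div_le_div_iff₀ hDpos hden]
  nlinarith [norm_nonneg S, key, hDpos]
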